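/- arXiv:2209.07871 — 4 statements merged into one kernel-verified Lean document; each statement's English description precedes it below -/
import Mathlib

section
/- For all positive integers n_1 ≥ n_2 with n_1 > 400, and nonnegative integer a, the equation α^{n_1} + α^{n_2} = 2^a·√5 has no solutions, where α = (1+√5)/2. -/
lemma sqrt5_sq : Real.sqrt 5 * Real.sqrt 5 = 5 :=
  Real.mul_self_sqrt (by norm_num)

lemma rep (n : ℕ) (hn : 1 ≤ n) : ∃ p q : ℚ, 0 < p ∧ 0 ≤ q ∧
    ((1 + Real.sqrt 5) / 2) ^ n = (p : ℝ) + (q : ℝ) * Real.sqrt 5 := by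
  induction n, hn using Nat.le_induction with
  | base =>
    refine ⟨1/2, 1/2, by norm_num, by norm_num, ?_⟩
    push_cast
    ring
  | succ n hn ih =>
    obtain ⟨p, q, hp, hq, heq⟩ := ih
    refine ⟨(p + 5*q)/2, (p + q)/2, by positivity, by positivity, ?_⟩
    rw [pow_succ, heq]
    push_cast
    linear_combination ((q : ℝ)/2) * sqrt5_sq

lemma rat_sqrt5 (r s : ℚ) (h : (r : ℝ) + (s : ℝ) * Real.sqrt 5 = 0) : r = 0 := by
  by_cases hs : s = 0
  · subst hs; simpa using h
  · exfalso
    have hirr : Irrational (Real.sqrt 5) := (Nat.prime_five).irrational_sqrt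
    have : Real.sqrt 5 = ((-r / s : ℚ) : ℝ) := by
      push_cast
      field_simp
      nlinarith [h]
    exact hirr ⟨-r/s, this.symm⟩

theorem no_sol_two (n₁ n₂ : ℕ) (a : ℕ) (h1 : 1 ≤ n₂) (h2 : n₂ ≤ n₁) (h3 : 400 < n₁) :
    ((1 + Real.sqrt 5) / 2) ^ n₁ + ((1 + Real.sqrt 5) / 2) ^ n₂ ≠ 2 ^ a * Real.sqrt 5 := by
  intro heq
  obtain ⟨p₁, q₁, hp₁, hq₁, e₁⟩ := rep n₁ (by omega)
  obtain ⟨p₂, q₂, hp₂, hq₂, e₂⟩ := rep n₂ h1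
  have h : ((p₁ + p₂ : ℚ) : ℝ) + ((q₁ + q₂ - 2^a : ℚ) : ℝ) * Real.sqrt 5 = 0 := by
    rw [e₁, e₂] at heq
    push_cast
    nlinarith [heq]
  have := rat_sqrt5 _ _ h
  have : (0:ℚ) < p₁ + p₂ := by positivity
  linarith [rat_sqrt5 _ _ h]
end

section
/- For all positive integers n_1 ≥ n_2 ≥ n_3 ≥ n_4 ≥ n_5 with n_1 > 400, and nonnegative integer a, the equation α^{n_1} + α^{n_2} + α^{n_3} + α^{n_4} + α^{n_5} = 2^a·√5 has no solutions, where α = (1+√5)/2. -/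
lemma alpha_pow_repr (n : ℕ) (hn : 1 ≤ n) :
    ∃ q r : ℚ, 0 < q ∧ 0 < r ∧
      ((1 + Real.sqrt 5) / 2) ^ n = (q : ℝ) + (r : ℝ) * Real.sqrt 5 := by
  induction n with
  | zero => omega
  | succ m ih =>
    rcases Nat.eq_or_lt_of_le hn with h | h
    · refine ⟨1/2, 1/2, by norm_num, by norm_num, ?_⟩
      have : m = 0 := by omega
      subst this
      rw [pow_one]
      push_cast
      ring
    · obtain ⟨q, r, hq, hr, hrepr⟩ := ih (by omega)
      refine ⟨q/2 + 5*r/2, q/2 + r/2, by positivity, by positivity, ?_⟩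
      rw [pow_succ, hrepr]
      push_cast
      ring_nf
      rw [Real.sq_sqrt (by norm_num : (0:ℝ) ≤ 5)]
      ring

theorem no_sol_five (n₁ n₂ n₃ n₄ n₅ : ℕ) (a : ℕ) (h1 : 1 ≤ n₅) (h2 : n₅ ≤ n₄)
    (h3 : n₄ ≤ n₃) (h4 : n₃ ≤ n₂) (h5 : n₂ ≤ n₁) (h6 : 400 < n₁) :
    ((1 + Real.sqrt 5) / 2) ^ n₁ + ((1 + Real.sqrt 5) / 2) ^ n₂ + ((1 + Real.sqrt 5) / 2) ^ n₃
      + ((1 + Real.sqrt 5) / 2) ^ n₄ + ((1 + Real.sqrt 5) / 2) ^ n₅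
      ≠ 2 ^ a * Real.sqrt 5 := by
  intro heq
  obtain ⟨q₁, r₁, hq₁, hr₁, e₁⟩ := alpha_pow_repr n₁ (by omega)
  obtain ⟨q₂, r₂, hq₂, hr₂, e₂⟩ := alpha_pow_repr n₂ (by omega)
  obtain ⟨q₃, r₃, hq₃, hr₃, e₃⟩ := alpha_pow_repr n₃ (by omega)
  obtain ⟨q₄, r₄, hq₄, hr₄, e₄⟩ := alpha_pow_repr n₄ (by omega)
  obtain ⟨q₅, r₅, hq₅, hr₅, e₅⟩ := alpha_pow_repr n₅ h1
  rw [e₁, e₂, e₃, e₄, e₅] at heq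
  set Q : ℚ := q₁ + q₂ + q₃ + q₄ + q₅ with hQ
  set R : ℚ := r₁ + r₂ + r₃ + r₄ + r₅ with hR
  have hQpos : 0 < Q := by positivity
  have key : (Q : ℝ) = ((2 ^ a - R : ℚ) : ℝ) * Real.sqrt 5 := by
    rw [hQ, hR]
    push_cast
    linear_combination heq
  have hirr : Irrational (Real.sqrt 5) := (by norm_num : Nat.Prime 5).irrational_sqrt
  by_cases hc : (2 ^ a - R : ℚ) = 0
  · have hQ0 : (Q : ℝ) = 0 := by rw [hc] at key; simpa using key
    exact hQpos.ne' (by exact_mod_cast hQ0)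
  · have hc' : ((2 ^ a - R : ℚ) : ℝ) ≠ 0 := by exact_mod_cast hc
    have : Real.sqrt 5 = ((Q / (2 ^ a - R) : ℚ) : ℝ) := by
      rw [Rat.cast_div, eq_div_iff hc', mul_comm]
      exact key.symm
    exact hirr ⟨_, this.symm⟩
end

section
/- If positive integers n_1 ≥ n_2 ≥ n_3 ≥ n_4 ≥ n_5 and nonnegative integer a satisfy F_{n_1} + F_{n_2} + F_{n_3} + F_{n_4} + F_{n_5} = 2^a with n_1 > 400, then |1 - 2^a·α^{-n_1}·√5| < 11.5/α^{n_1-n_2}, where α = (1+√5)/2. -/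
/-!
By Binet's formula `√5 F_n = φⁿ - ψⁿ` with `|ψ| < 1`, so `√5 F_{n₁}` is within `1` of `φ^{n₁}`
and each of the four smaller terms satisfies `√5 F_{nᵢ} ≤ φ^{n₂} + 1 ≤ 2 φ^{n₂}`. Hence
`|φ^{n₁} - √5 · 2ᵃ| ≤ 9 φ^{n₂}`, and dividing by `φ^{n₁}` gives the bound with `9 < 11.5`.
-/

open Real Finset goldenRatio

namespace Real

theorem sqrt_five_mul_fib (n : ℕ) : √5 * Nat.fib n = φ ^ n - ψ ^ n := by
  rw [coe_fib_eq, mul_div_cancel₀ _ (by positivity)]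

theorem abs_goldenConj_pow_le_one (n : ℕ) : |ψ ^ n| ≤ 1 := by
  rw [abs_pow]
  refine pow_le_one₀ (abs_nonneg _) (abs_le.mpr ⟨neg_one_lt_goldenConj.le, ?_⟩)
  exact goldenConj_neg.le.trans zero_le_one

theorem abs_goldenRatio_pow_sub_sqrt_five_mul_fib_le_one (n : ℕ) :
    |φ ^ n - √5 * Nat.fib n| ≤ 1 := by
  rw [sqrt_five_mul_fib, sub_sub_cancel]
  exact abs_goldenConj_pow_le_one n

theorem sqrt_five_mul_fib_le_two_mul_goldenRatio_pow {n m : ℕ} (h : n ≤ m) :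
    √5 * Nat.fib n ≤ 2 * φ ^ m := by
  have hψ := abs_le.mp (abs_goldenConj_pow_le_one n)
  have hφn : φ ^ n ≤ φ ^ m := pow_le_pow_right₀ one_lt_goldenRatio.le h
  have hφm : 1 ≤ φ ^ m := one_le_pow₀ one_lt_goldenRatio.le
  rw [sqrt_five_mul_fib]
  linarith

theorem sqrt_five_mul_sum_fib_le {ι : Type*} (s : Finset ι) (n : ι → ℕ) {m : ℕ}
    (h : ∀ i ∈ s, n i ≤ m) : √5 * ∑ i ∈ s, (Nat.fib (n i) : ℝ) ≤ 2 * #s * φ ^ m := by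
  rw [mul_sum]
  calc ∑ i ∈ s, √5 * (Nat.fib (n i) : ℝ) ≤ ∑ _i ∈ s, 2 * φ ^ m :=
        sum_le_sum fun i hi => sqrt_five_mul_fib_le_two_mul_goldenRatio_pow (h i hi)
    _ = 2 * #s * φ ^ m := by rw [sum_const, nsmul_eq_mul]; ring

theorem abs_goldenRatio_pow_sub_sqrt_five_mul_fib_add_sum_fib_le {ι : Type*} (s : Finset ι)
    (n : ι → ℕ) {m : ℕ} (h : ∀ i ∈ s, n i ≤ m) (N : ℕ) :
    |φ ^ N - √5 * (Nat.fib N + ∑ i ∈ s, (Nat.fib (n i) : ℝ))| ≤ (2 * #s + 1) * φ ^ m := by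
  have hlead := abs_goldenRatio_pow_sub_sqrt_five_mul_fib_le_one N
  have hrest := sqrt_five_mul_sum_fib_le s n h
  have hsum_nonneg : 0 ≤ √5 * ∑ i ∈ s, (Nat.fib (n i) : ℝ) := by positivity
  have hφm : 1 ≤ φ ^ m := one_le_pow₀ one_lt_goldenRatio.le
  calc |φ ^ N - √5 * (Nat.fib N + ∑ i ∈ s, (Nat.fib (n i) : ℝ))|
      = |(φ ^ N - √5 * Nat.fib N) - √5 * ∑ i ∈ s, (Nat.fib (n i) : ℝ)| := by ring_nf
    _ ≤ |φ ^ N - √5 * Nat.fib N| + |√5 * ∑ i ∈ s, (Nat.fib (n i) : ℝ)| := abs_sub _ _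
    _ ≤ (2 * #s + 1) * φ ^ m := by rw [abs_of_nonneg hsum_nonneg]; linarith

theorem one_sub_mul_goldenRatio_zpow_neg_mul_sqrt_five (x : ℝ) (N : ℕ) :
    1 - x * φ ^ (-(N : ℤ)) * √5 = (φ ^ N - √5 * x) / φ ^ N := by
  rw [zpow_neg, zpow_natCast]
  field_simp

theorem goldenRatio_pow_div_goldenRatio_pow {m N : ℕ} (h : m ≤ N) :
    φ ^ m / φ ^ N = 1 / φ ^ (N - m) := by
  rw [← Nat.sub_add_cancel h, pow_add, Nat.add_sub_cancel, div_mul_cancel_right₀ (by positivity),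
    one_div]

end Real

theorem lambda1_bound_general (n₁ n₂ n₃ n₄ n₅ a : ℕ)
    (h2 : n₅ ≤ n₄) (h3 : n₄ ≤ n₃) (h4 : n₃ ≤ n₂) (h5 : n₂ ≤ n₁)
    (heq : Nat.fib n₁ + Nat.fib n₂ + Nat.fib n₃ + Nat.fib n₄ + Nat.fib n₅ = 2 ^ a) :
    |1 - (2 : ℝ) ^ a * ((1 + Real.sqrt 5) / 2) ^ (-(n₁ : ℤ)) * Real.sqrt 5|
      < 11.5 / ((1 + Real.sqrt 5) / 2) ^ (n₁ - n₂) := by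
  change |1 - (2 : ℝ) ^ a * φ ^ (-(n₁ : ℤ)) * √5| < 11.5 / φ ^ (n₁ - n₂)
  have hsum : (2 : ℝ) ^ a = Nat.fib n₁ + ∑ i, (Nat.fib (![n₂, n₃, n₄, n₅] i) : ℝ) := by
    have hcast := congrArg (Nat.cast : ℕ → ℝ) heq
    push_cast at hcast
    rw [← hcast, Fin.sum_univ_four]
    simp only [Matrix.cons_val]
    ring
  have hclose : |φ ^ n₁ - √5 * 2 ^ a| ≤ 9 * φ ^ n₂ := by
    rw [hsum]
    have hle : ∀ i ∈ univ, ![n₂, n₃, n₄, n₅] i ≤ n₂ := by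
      simp only [mem_univ, forall_const, Fin.forall_fin_succ, Matrix.cons_val_zero,
        Matrix.cons_val_succ, Matrix.cons_val_fin_one]
      omega
    convert abs_goldenRatio_pow_sub_sqrt_five_mul_fib_add_sum_fib_le univ _ hle n₁ using 1
    norm_num
  rw [one_sub_mul_goldenRatio_zpow_neg_mul_sqrt_five, abs_div,
    abs_of_pos (pow_pos goldenRatio_pos n₁)]
  calc |φ ^ n₁ - √5 * 2 ^ a| / φ ^ n₁ ≤ 9 * φ ^ n₂ / φ ^ n₁ := by gcongr
    _ = 9 / φ ^ (n₁ - n₂) := by rw [mul_div_assoc, goldenRatio_pow_div_goldenRatio_pow h5]; ring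
    _ < 11.5 / φ ^ (n₁ - n₂) := by gcongr; norm_num

theorem lambda1_bound (n₁ n₂ n₃ n₄ n₅ a : ℕ)
    (h1 : 1 ≤ n₅) (h2 : n₅ ≤ n₄) (h3 : n₄ ≤ n₃) (h4 : n₃ ≤ n₂) (h5 : n₂ ≤ n₁)
    (h6 : 400 < n₁)
    (heq : Nat.fib n₁ + Nat.fib n₂ + Nat.fib n₃ + Nat.fib n₄ + Nat.fib n₅ = 2 ^ a) :
    |1 - (2 : ℝ) ^ a * ((1 + Real.sqrt 5) / 2) ^ (-(n₁ : ℤ)) * Real.sqrt 5|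
      < 11.5 / ((1 + Real.sqrt 5) / 2) ^ (n₁ - n₂) :=
  lambda1_bound_general n₁ n₂ n₃ n₄ n₅ a h2 h3 h4 h5 heq
end

section
/- The only Fibonacci numbers that are powers of 2 are F_1 = F_2 = 1, F_3 = 2, and F_6 = 8; i.e., if F_n = 2^a for positive integers n and nonnegative integer a, then n ∈ {1, 2, 3, 6}. -/
lemma fib_add_24_mod (n : ℕ) : Nat.fib (n + 24) % 16 = Nat.fib n % 16 := by
  have h := Nat.fib_add 23 n
  have h23 : Nat.fib 23 = 28657 := by decide
  have h24 : Nat.fib 24 = 46368 := by decide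
  rw [show 23 + n + 1 = n + 24 by omega, h23, h24] at h
  omega

lemma fib_mod_16_periodic (n : ℕ) : Nat.fib n % 16 = Nat.fib (n % 24) % 16 := by
  induction n using Nat.strong_induction_on with
  | _ n ih =>
    rcases lt_or_ge n 24 with h | h
    · rw [Nat.mod_eq_of_lt h]
    · obtain ⟨m, rfl⟩ : ∃ m, n = m + 24 := ⟨n - 24, by omega⟩
      rw [fib_add_24_mod, ih m (by omega)]
      congr 2
      omega

theorem fib_pow_two (n : ℕ) (a : ℕ) (hn : 1 ≤ n) (heq : Nat.fib n = 2 ^ a) :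
    n ∈ ({1, 2, 3, 6} : Set ℕ) := by
  rcases le_or_gt a 3 with ha | ha
  · -- fib n ≤ 8, so n ≤ 6
    have h8 : Nat.fib n ≤ 8 := by
      rw [heq]
      calc 2 ^ a ≤ 2 ^ 3 := Nat.pow_le_pow_right (by norm_num) ha
        _ = 8 := by norm_num
    have hn6 : n ≤ 6 := by
      by_contra h
      have h7 : Nat.fib 7 ≤ Nat.fib n := Nat.fib_mono (by omega)
      have : Nat.fib 7 = 13 := by decide
      omega
    interval_cases n <;> interval_cases a <;> revert heq <;> decide
  · -- a ≥ 4, contradiction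
    exfalso
    have h16 : Nat.fib n % 16 = 0 := by
      have : (16 : ℕ) ∣ 2 ^ a := by
        have : (2:ℕ) ^ 4 ∣ 2 ^ a := Nat.pow_dvd_pow 2 (by omega)
        simpa using this
      omega
    have hr := fib_mod_16_periodic n
    have hlt : n % 24 < 24 := Nat.mod_lt _ (by norm_num)
    have hcheck : ∀ r < 24, Nat.fib r % 16 = 0 → r = 0 ∨ r = 12 := by decide
    have h12 : 12 ∣ n := by
      have := hcheck (n % 24) hlt (by omega)
      omega
    have hdvd : Nat.fib 12 ∣ Nat.fib n := Nat.fib_dvd 12 n h12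
    have h144 : Nat.fib 12 = 144 := by decide
    have h9 : (9 : ℕ) ∣ 2 ^ a := by
      rw [← heq]
      exact dvd_trans (by norm_num) (h144 ▸ hdvd)
    have h3 : (3 : ℕ) ∣ 2 ^ a := dvd_trans (by norm_num) h9
    have := (Nat.prime_three).dvd_of_dvd_pow h3
    omega
end
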